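/- Let X be a complex Banach space. Every strong peak point for A_{w*u}(B_{X*}) is a complex extreme point of B_{X*}; that is, Γ ⊆ ext_ℂ(B_{X*}). -/

import Mathlib

/-!
If `x₀` is not a complex extreme point, some `y ≠ 0` satisfies `‖x₀ + λ • y‖ ≤ 1` on the unit
circle, hence by convexity on the closed unit disc. For `0 < r < 1`, the maximum modulus principle
for `λ ↦ f (r • (x₀ + λ • y))` bounds `‖f (r • x₀)‖` by the values of the peak function `f` on the
circle `r • (x₀ + 𝕋 • y)`. For `r` close to `1` this circle stays outside a fixed weak-*
neighbourhood of `x₀`, where `‖f‖ ≤ c < 1`; letting `r → 1` gives `‖f x₀‖ ≤ c < 1`.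
-/

open NormedSpace Metric Filter Topology Complex

noncomputable section

variable {X Y : Type*} [NormedAddCommGroup X] [NormedSpace ℂ X]
  [NormedAddCommGroup Y] [NormedSpace ℂ Y]

/-- Membership in `A_{w*u}(B_{X*}, Y)`: `f` is weak-*-to-norm continuous on the closed unit
ball of the dual (equivalently, weak-* uniformly continuous, as the ball is weak-* compact)
and holomorphic on the open unit ball. -/
def MemAwsu (f : StrongDual ℂ X → Y) : Prop :=
  ContinuousOn (fun φ : WeakDual ℂ X => f (WeakDual.toStrongDual φ))
      {φ : WeakDual ℂ X | ‖WeakDual.toStrongDual φ‖ ≤ 1}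
    ∧ DifferentiableOn ℂ f (ball (0 : StrongDual ℂ X) 1)

/-- The supremum norm `‖f‖_∞ = sup {‖f x*‖ : x* ∈ B_{X*}}`. -/
def supNorm (f : StrongDual ℂ X → Y) : ℝ :=
  ⨆ x : closedBall (0 : StrongDual ℂ X) 1, ‖f (x : StrongDual ℂ X)‖

/-- `x₀` is a strong peak point for `A_{w*u}(B_{X*})` (peaking with respect to the weak-*
topology). -/
def IsWStarStrongPeakPoint (x₀ : StrongDual ℂ X) : Prop :=
  ∃ f : StrongDual ℂ X → ℂ, MemAwsu f ∧ supNorm f = 1 ∧ ‖f x₀‖ = 1 ∧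
    ∀ W : Set (WeakDual ℂ X), IsOpen W → StrongDual.toWeakDual x₀ ∈ W →
      ∃ c < 1, ∀ y ∈ closedBall (0 : StrongDual ℂ X) 1,
        StrongDual.toWeakDual y ∉ W → ‖f y‖ ≤ c

/-- `x` is a complex extreme point of the closed unit ball of `Z`:
`sup_{0 ≤ θ ≤ 2π} ‖x + e^{iθ} y‖ > 1` for every nonzero `y`. -/
def IsComplexExtremePoint {Z : Type*} [NormedAddCommGroup Z] [NormedSpace ℂ Z]
    (x : Z) : Prop :=
  x ∈ closedBall (0 : Z) 1 ∧
    ∀ y : Z, y ≠ 0 → ∃ θ ∈ Set.Icc (0 : ℝ) (2 * Real.pi),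
      1 < ‖x + Complex.exp (θ * Complex.I) • y‖

theorem Complex.exists_mem_Icc_exp_mul_I_eq {z : ℂ} (hz : ‖z‖ = 1) :
    ∃ θ ∈ Set.Icc 0 (2 * Real.pi), Complex.exp (θ * I) = z := by
  obtain ⟨θ, hθ, hexp⟩ := Circle.periodic_exp.exists_mem_Ico₀ Real.two_pi_pos z.arg
  refine ⟨θ, Set.Ico_subset_Icc_self hθ, ?_⟩
  rw [← Circle.coe_exp, ← hexp, Circle.coe_exp]
  simpa [hz] using norm_mul_exp_arg_mul_I z

section

variable {E F : Type*} [NormedAddCommGroup E] [NormedSpace ℂ E]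
  [NormedAddCommGroup F] [NormedSpace ℂ F]

theorem norm_add_smul_le_one_of_forall_norm_eq_one {x y : E}
    (h : ∀ z : ℂ, ‖z‖ = 1 → ‖x + z • y‖ ≤ 1) {z : ℂ} (hz : ‖z‖ ≤ 1) :
    ‖x + z • y‖ ≤ 1 := by
  have hconv : Convex ℝ {z : ℂ | ‖x + z • y‖ ≤ 1} := by
    intro a ha b hb s t hs ht hst
    calc ‖x + (s • a + t • b) • y‖ = ‖s • (x + a • y) + t • (x + b • y)‖ := by
          rw [Complex.real_smul, Complex.real_smul]
          congr 1
          linear_combination (norm := module) hst.symm • x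
      _ ≤ s * 1 + t * 1 := by
          refine norm_add_le_of_le ?_ ?_ <;> rw [norm_smul, Real.norm_of_nonneg ‹_›] <;>
            gcongr
          exacts [ha, hb]
      _ = 1 := by rw [mul_one, mul_one, hst]
  have hball : closedBall (0 : ℂ) 1 ⊆ {z : ℂ | ‖x + z • y‖ ≤ 1} := by
    rw [← convexHull_sphere_eq_closedBall 0 zero_le_one]
    exact convexHull_min (fun z hz => h z (mem_sphere_zero_iff_norm.1 hz)) hconv
  exact hball (mem_closedBall_zero_iff.2 hz)

theorem norm_le_of_forall_norm_add_smul_le {f : E → F} {U : Set E}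
    (hf : DifferentiableOn ℂ f U) (hU : IsOpen U) {a b : E}
    (hdisc : ∀ z : ℂ, ‖z‖ ≤ 1 → a + z • b ∈ U) {c : ℝ}
    (hcircle : ∀ z : ℂ, ‖z‖ = 1 → ‖f (a + z • b)‖ ≤ c) : ‖f a‖ ≤ c := by
  have hg : DiffContOnCl ℂ (fun z : ℂ => f (a + z • b)) (ball 0 1) := by
    refine DifferentiableOn.diffContOnCl fun z hz => ?_
    rw [closure_ball 0 one_ne_zero, mem_closedBall_zero_iff] at hz
    exact ((hf.differentiableAt (hU.mem_nhds (hdisc z hz))).comp z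
      ((differentiableAt_id.smul_const b).const_add a)).differentiableWithinAt
  have h := Complex.norm_le_of_forall_mem_frontier_norm_le isBounded_ball hg
    (fun z hz => hcircle z (by rwa [frontier_ball 0 one_ne_zero, mem_sphere_zero_iff_norm] at hz))
    (subset_closure (mem_ball_self one_pos))
  simpa using h

theorem norm_apply_smul_le_of_forall_norm_add_smul_le {f : E → F}
    (hf : DifferentiableOn ℂ f (ball 0 1)) {x y : E}
    (hdisc : ∀ z : ℂ, ‖z‖ ≤ 1 → ‖x + z • y‖ ≤ 1) {r : ℝ} (hr₀ : 0 ≤ r) (hr₁ : r < 1) {c : ℝ}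
    (hcircle : ∀ z : ℂ, ‖z‖ = 1 → ‖f ((r : ℂ) • (x + z • y))‖ ≤ c) :
    ‖f ((r : ℂ) • x)‖ ≤ c := by
  have hsmul : ∀ z : ℂ, (r : ℂ) • x + z • (r : ℂ) • y = (r : ℂ) • (x + z • y) := fun z => by
    rw [smul_add, smul_comm]
  refine norm_le_of_forall_norm_add_smul_le hf isOpen_ball (fun z hz => ?_)
    (fun z hz => hsmul z ▸ hcircle z hz)
  rw [hsmul, mem_ball_zero_iff, norm_smul, norm_real, Real.norm_of_nonneg hr₀]
  exact (mul_le_of_le_one_right hr₀ (hdisc z hz)).trans_lt hr₁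

end

theorem Complex.eventually_le_norm_ofReal_mul_add_sub (a : ℂ) {b : ℂ} {ε : ℝ} (hε : ε < ‖b‖) :
    ∀ᶠ r : ℝ in 𝓝 1, ∀ z : ℂ, ‖z‖ = 1 → ε ≤ ‖(r : ℂ) * (a + z * b) - a‖ := by
  have hlim : Tendsto (fun r : ℝ => |r| * ‖b‖ - |1 - r| * ‖a‖) (𝓝 1) (𝓝 ‖b‖) := by
    have hcont : Continuous fun r : ℝ => |r| * ‖b‖ - |1 - r| * ‖a‖ := by fun_prop
    exact hcont.tendsto' 1 _ (by simp)
  filter_upwards [hlim.eventually_const_lt hε] with r hr z hz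
  calc ε ≤ |r| * ‖b‖ - |1 - r| * ‖a‖ := hr.le
    _ = ‖(r : ℂ) * z * b‖ - ‖(1 - r : ℂ) * a‖ := by
      rw [norm_mul, norm_mul, norm_mul, hz, mul_one, norm_real, ← ofReal_one, ← ofReal_sub,
        norm_real, Real.norm_eq_abs, Real.norm_eq_abs]
    _ ≤ ‖(r : ℂ) * z * b - (1 - r : ℂ) * a‖ := norm_sub_norm_le _ _
    _ = ‖(r : ℂ) * (a + z * b) - a‖ := by ring_nf

theorem tendsto_apply_ofReal_smul_nhdsLT_one {Z : Type*} [TopologicalSpace Z]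
    {f : StrongDual ℂ X → Z}
    (hf : ContinuousOn (fun φ : WeakDual ℂ X => f (WeakDual.toStrongDual φ))
      {φ : WeakDual ℂ X | ‖WeakDual.toStrongDual φ‖ ≤ 1})
    {x : StrongDual ℂ X} (hx : ‖x‖ ≤ 1) :
    Tendsto (fun r : ℝ => f ((r : ℂ) • x)) (𝓝[<] 1) (𝓝 (f x)) := by
  refine (hf (StrongDual.toWeakDual x) hx).tendsto.comp (tendsto_nhdsWithin_iff.2 ⟨?_, ?_⟩)
  · refine Tendsto.mono_left ?_ nhdsWithin_le_nhds
    have hcont : Continuous fun r : ℝ => StrongDual.toWeakDual ((r : ℂ) • x) :=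
      NormedSpace.Dual.toWeakDual_continuous.comp (continuous_ofReal.smul continuous_const)
    exact hcont.tendsto' 1 _ (by simp)
  · filter_upwards [Ioo_mem_nhdsLT zero_lt_one] with r hr
    show ‖(r : ℂ) • x‖ ≤ 1
    rw [norm_smul, norm_real, Real.norm_of_nonneg hr.1.le]
    exact mul_le_one₀ hr.2.le (norm_nonneg x) hx

theorem strong_peak_point_is_complex_extreme_general
    (X : Type*) [NormedAddCommGroup X] [NormedSpace ℂ X]
    (x₀ : StrongDual ℂ X) (hx₀ : ‖x₀‖ = 1) (hpk : IsWStarStrongPeakPoint x₀) :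
    IsComplexExtremePoint x₀ := by
  obtain ⟨f, ⟨hfc, hfd⟩, -, hfx₀, hpeak⟩ := hpk
  refine ⟨mem_closedBall_zero_iff.2 hx₀.le, fun y hy => ?_⟩
  by_contra! hcircle
  have hdisc : ∀ z : ℂ, ‖z‖ ≤ 1 → ‖x₀ + z • y‖ ≤ 1 :=
    fun z => norm_add_smul_le_one_of_forall_norm_eq_one fun w hw => by
      obtain ⟨θ, hθ, rfl⟩ := Complex.exists_mem_Icc_exp_mul_I_eq hw
      exact hcircle θ hθ
  obtain ⟨x, hx⟩ : ∃ x, y x ≠ 0 := by simpa using DFunLike.ne_iff.1 hy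
  -- `W` separates `x₀` from the circles `r (x₀ + 𝕋 y)` with `r` close to `1`.
  set W : Set (WeakDual ℂ X) := (fun φ => φ x) ⁻¹' ball (x₀ x) (‖y x‖ / 2)
  obtain ⟨c, hc₁, hc⟩ := hpeak W (isOpen_ball.preimage (WeakDual.eval_continuous x))
    (by simpa [W] using hx)
  have hnear : ∀ᶠ r : ℝ in 𝓝[<] 1, ‖f ((r : ℂ) • x₀)‖ ≤ c := by
    filter_upwards [Ioo_mem_nhdsLT zero_lt_one, nhdsWithin_le_nhds
      (Complex.eventually_le_norm_ofReal_mul_add_sub (x₀ x) (half_lt_self (norm_pos_iff.2 hx)))]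
      with r ⟨hr₀, hr₁⟩ hfar
    refine norm_apply_smul_le_of_forall_norm_add_smul_le hfd hdisc hr₀.le hr₁ fun z hz => hc _ ?_ ?_
    · rw [mem_closedBall_zero_iff, norm_smul, norm_real, Real.norm_of_nonneg hr₀.le]
      exact mul_le_one₀ hr₁.le (norm_nonneg _) (hdisc z hz.le)
    · show ¬ dist (((r : ℂ) • (x₀ + z • y)) x) (x₀ x) < ‖y x‖ / 2
      simpa [dist_eq_norm, mul_add] using hfar z hz
  have hle := le_of_tendsto (tendsto_apply_ofReal_smul_nhdsLT_one hfc hx₀.le).norm hnear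
  linarith

/-- Every strong peak point for `A_{w*u}(B_{X*})` is a complex extreme point of
`B_{X*}`, i.e. `Γ ⊆ ext_ℂ(B_{X*})`. -/
theorem strong_peak_point_is_complex_extreme
    (X : Type*) [NormedAddCommGroup X] [NormedSpace ℂ X] [CompleteSpace X]
    (x₀ : StrongDual ℂ X) (hx₀ : ‖x₀‖ = 1) (hpk : IsWStarStrongPeakPoint x₀) :
    IsComplexExtremePoint x₀ :=
  strong_peak_point_is_complex_extreme_general X x₀ hx₀ hpk
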